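/- arXiv:2002.08082 — 2 statements merged into one kernel-verified Lean document; each statement's English description precedes it below -/
import Mathlib

section
/- For every node u ∈ V, every real εₕ with 0 < εₕ < 1, and every level ℓ > ⌊log(1/εₕ) / log(1/√c)⌋, one has h ℓ u w < εₕ for every node w ∈ V. (This is the second part of Lemma 2: all attention nodes exist within L* = ⌊log_{1/√c}(1/εₕ)⌋ steps from u.) -/
/-!
One step of the walk multiplies the total mass by exactly `√c`: node `v` hands `√c · h ℓ u v` out in
equal shares to its `|I(v)|` in-neighbours. So the hitting probabilities at level `ℓ` are nonnegative
with total mass `(√c)^ℓ`, each of them is at most `(√c)^ℓ`, and the level bound is exactly what makes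
`(√c)^ℓ < εₕ`.
-/

open Finset Real

section Walk

variable {V : Type*} [Fintype V] [DecidableEq V]

noncomputable def walkStep (I : V → Finset V) (s : ℝ) (f : V → ℝ) (w : V) : ℝ :=
  ∑ v ∈ univ.filter (fun v => w ∈ I v), s / #(I v) * f v

lemma walkStep_nonneg {I : V → Finset V} {s : ℝ} (hs : 0 ≤ s) {f : V → ℝ} (hf : 0 ≤ f) :
    0 ≤ walkStep I s f :=
  fun _ => sum_nonneg fun v _ => mul_nonneg (div_nonneg hs (Nat.cast_nonneg _)) (hf v)

lemma sum_walkStep {I : V → Finset V} (hI : ∀ v, (I v).Nonempty) (s : ℝ) (f : V → ℝ) :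
    ∑ w, walkStep I s f w = s * ∑ v, f v := by
  have hshare : ∀ v, ∑ w, (if w ∈ I v then s / #(I v) * f v else 0) = s * f v := by
    intro v
    have hcard : (#(I v) : ℝ) ≠ 0 := Nat.cast_ne_zero.mpr (hI v).card_ne_zero
    rw [sum_ite_mem, univ_inter, sum_const, nsmul_eq_mul]
    field_simp
  simp only [walkStep, sum_filter]
  rw [sum_comm, mul_sum]
  exact sum_congr rfl fun v _ => hshare v

variable {I : V → Finset V} {s : ℝ} {f : ℕ → V → ℝ}

lemma nonneg_of_walkStep (hs : 0 ≤ s) (hstep : ∀ n, f (n + 1) = walkStep I s (f n))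
    (h0 : 0 ≤ f 0) (n : ℕ) : 0 ≤ f n := by
  induction n with
  | zero => exact h0
  | succ n ih => exact hstep n ▸ walkStep_nonneg hs ih

lemma sum_eq_pow_mul_of_walkStep (hI : ∀ v, (I v).Nonempty)
    (hstep : ∀ n, f (n + 1) = walkStep I s (f n)) (n : ℕ) :
    ∑ w, f n w = s ^ n * ∑ w, f 0 w := by
  induction n with
  | zero => rw [pow_zero, one_mul]
  | succ n ih => rw [hstep, sum_walkStep hI, ih, pow_succ, mul_assoc, mul_left_comm]

end Walk

lemma pow_lt_of_floor_log_div_log_lt {s ε : ℝ} (hs0 : 0 < s) (hs1 : s < 1) (hε : 0 < ε) {n : ℕ}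
    (hn : ⌊log (1 / ε) / log (1 / s)⌋₊ < n) : s ^ n < ε := by
  have hlog_pos : 0 < log (1 / s) := log_pos (one_lt_one_div hs0 hs1)
  have hratio : log (1 / ε) / log (1 / s) < n := (Nat.floor_lt' (by omega)).mp hn
  have hlog : log (1 / ε) < log (1 / s ^ n) := by
    rwa [div_lt_iff₀ hlog_pos, ← log_pow, one_div_pow] at hratio
  rw [log_lt_log_iff (by positivity) (by positivity)] at hlog
  exact (one_div_lt_one_div hε (by positivity)).mp hlog

theorem stmt_5_general {V : Type*} [Fintype V] [DecidableEq V]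
    (I : V → Finset V) (hI : ∀ v, (I v).Nonempty)
    (c : ℝ) (hc0 : 0 < c) (hc1 : c < 1)
    (h : ℕ → V → V → ℝ)
    (h0 : ∀ u w, h 0 u w = if w = u then 1 else 0)
    (hrec : ∀ ℓ u w, h (ℓ + 1) u w =
      ∑ v ∈ Finset.univ.filter (fun v => w ∈ I v),
        (Real.sqrt c / (I v).card) * h ℓ u v)
    (u : V) (εh : ℝ) (hεh0 : 0 < εh)
    (ℓ : ℕ) (hℓ : ⌊Real.log (1 / εh) / Real.log (1 / Real.sqrt c)⌋₊ < ℓ) :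
    ∀ w : V, h ℓ u w < εh := by
  have hstep : ∀ n, h (n + 1) u = walkStep I (√c) (h n u) := fun n => funext (hrec n u)
  have hstart_nonneg : 0 ≤ h 0 u := fun w => by rw [h0]; split_ifs <;> norm_num
  have hstart_mass : ∑ w, h 0 u w = 1 := by simp [h0]
  have hmass : ∑ w, h ℓ u w = √c ^ ℓ := by
    rw [sum_eq_pow_mul_of_walkStep (f := fun n => h n u) hI hstep, hstart_mass, mul_one]
  intro w
  calc h ℓ u w ≤ ∑ w', h ℓ u w' :=
        single_le_sum (fun v _ => nonneg_of_walkStep (f := fun n => h n u) (sqrt_nonneg c) hstep hstart_nonneg ℓ v)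
          (mem_univ w)
    _ = √c ^ ℓ := hmass
    _ < εh := pow_lt_of_floor_log_div_log_lt (sqrt_pos.mpr hc0)
        ((sqrt_lt' one_pos).mpr (by rwa [one_pow])) hεh0 hℓ

theorem stmt_5 {V : Type*} [Fintype V] [DecidableEq V]
    (I : V → Finset V) (hI : ∀ v, (I v).Nonempty)
    (c : ℝ) (hc0 : 0 < c) (hc1 : c < 1)
    (h : ℕ → V → V → ℝ)
    (h0 : ∀ u w, h 0 u w = if w = u then 1 else 0)
    (hrec : ∀ ℓ u w, h (ℓ + 1) u w =
      ∑ v ∈ Finset.univ.filter (fun v => w ∈ I v),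
        (Real.sqrt c / (I v).card) * h ℓ u v)
    (u : V) (εh : ℝ) (hεh0 : 0 < εh) (hεh1 : εh < 1)
    (ℓ : ℕ) (hℓ : ⌊Real.log (1 / εh) / Real.log (1 / Real.sqrt c)⌋₊ < ℓ) :
    ∀ w : V, h ℓ u w < εh :=
  stmt_5_general I hI c hc0 hc1 h h0 hrec u εh hεh0 ℓ hℓ
end

section
/- Let u, v ∈ V and let η : V → ℝ satisfy 0 ≤ η w ≤ 1 for all w ∈ V. Then the function ℓ ↦ ∑_{w ∈ V} h ℓ u w · η w · h ℓ v w is summable over ℓ ∈ ℕ, and ∑_{ℓ=0}^{∞} ∑_{w ∈ V} h ℓ u w · η w · h ℓ v w ≤ 1/(1 − √c). -/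
/-! Each step of the walk sends the mass at `v` to its in-neighbours with total weight at most
`√c`, so `∑ w, h ℓ u w ≤ √c ^ ℓ` by induction. As `0 ≤ η ≤ 1` and `0 ≤ h ℓ v w ≤ 1`, the
`ℓ`-th term of the series is at most `∑ w, h ℓ u w`, hence bounded by a geometric series of
ratio `√c < 1`. -/

open Finset

section HittingProbability

variable {V : Type*} [Fintype V] [DecidableEq V] {I : V → Finset V} {r : ℝ} {h : ℕ → V → V → ℝ}

theorem hitting_nonneg (hr : 0 ≤ r) (h0 : ∀ u w, h 0 u w = if w = u then 1 else 0)
    (hrec : ∀ ℓ u w, h (ℓ + 1) u w =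
      ∑ v ∈ univ.filter (fun v => w ∈ I v), (r / (I v).card) * h ℓ u v) :
    ∀ ℓ u w, 0 ≤ h ℓ u w := by
  intro ℓ
  induction ℓ with
  | zero => intro u w; rw [h0]; positivity
  | succ n ih =>
    intro u w
    rw [hrec]
    exact sum_nonneg fun v _ => mul_nonneg (by positivity) (ih u v)

theorem sum_hitting_le_pow (hr : 0 ≤ r) (h0 : ∀ u w, h 0 u w = if w = u then 1 else 0)
    (hrec : ∀ ℓ u w, h (ℓ + 1) u w =
      ∑ v ∈ univ.filter (fun v => w ∈ I v), (r / (I v).card) * h ℓ u v) :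
    ∀ ℓ u, ∑ w, h ℓ u w ≤ r ^ ℓ := by
  have hpos := hitting_nonneg hr h0 hrec
  intro ℓ
  induction ℓ with
  | zero => intro u; simp [h0]
  | succ n ih =>
    intro u
    have hout : ∀ v, (I v).card * (r / (I v).card) ≤ r := by
      intro v
      rcases eq_or_ne ((I v).card : ℝ) 0 with hv | hv
      · simpa [hv] using hr
      · rw [mul_div_cancel₀ r hv]
    calc ∑ w, h (n + 1) u w
        = ∑ v, ∑ w ∈ I v, (r / (I v).card) * h n u v := by
          simp_rw [hrec]
          exact sum_comm' fun w v => by simp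
      _ = ∑ v, (I v).card * (r / (I v).card) * h n u v := by
          simp only [sum_const, nsmul_eq_mul, mul_assoc]
      _ ≤ ∑ v, r * h n u v :=
          sum_le_sum fun v _ => mul_le_mul_of_nonneg_right (hout v) (hpos n u v)
      _ ≤ r ^ (n + 1) := by
          rw [← mul_sum, pow_succ']
          exact mul_le_mul_of_nonneg_left (ih u) hr

end HittingProbability

theorem sum_mul_mul_le_sum {ι : Type*} (s : Finset ι) {x η y : ι → ℝ}
    (hx : ∀ i, 0 ≤ x i) (hη : ∀ i, 0 ≤ η i ∧ η i ≤ 1) (hy : ∀ i, 0 ≤ y i ∧ y i ≤ 1) :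
    ∑ i ∈ s, x i * η i * y i ≤ ∑ i ∈ s, x i :=
  sum_le_sum fun i _ =>
    mul_le_of_le_one_right (mul_nonneg (hx i) (hη i).1) (hy i).2 |>.trans
      (mul_le_of_le_one_right (hx i) (hη i).2)

theorem summable_and_tsum_le_of_le_geometric {f : ℕ → ℝ} {r : ℝ} (hr0 : 0 ≤ r) (hr1 : r < 1)
    (hf0 : ∀ n, 0 ≤ f n) (hf : ∀ n, f n ≤ r ^ n) :
    Summable f ∧ ∑' n, f n ≤ 1 / (1 - r) := by
  have hgeom := summable_geometric_of_lt_one hr0 hr1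
  have hsum : Summable f := hgeom.of_nonneg_of_le hf0 hf
  refine ⟨hsum, ?_⟩
  calc ∑' n, f n ≤ ∑' n, r ^ n := hsum.tsum_le_tsum hf hgeom
    _ = 1 / (1 - r) := by rw [tsum_geometric_of_lt_one hr0 hr1, one_div]

theorem stmt_7_general {V : Type*} [Fintype V] [DecidableEq V]
    (I : V → Finset V)
    (c : ℝ) (hc1 : c < 1)
    (h : ℕ → V → V → ℝ)
    (h0 : ∀ u w, h 0 u w = if w = u then 1 else 0)
    (hrec : ∀ ℓ u w, h (ℓ + 1) u w =
      ∑ v ∈ Finset.univ.filter (fun v => w ∈ I v),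
        (Real.sqrt c / (I v).card) * h ℓ u v)
    (u v : V) (η : V → ℝ) (hη : ∀ w, 0 ≤ η w ∧ η w ≤ 1) :
    Summable (fun ℓ : ℕ => ∑ w, h ℓ u w * η w * h ℓ v w) ∧
    ∑' ℓ : ℕ, ∑ w, h ℓ u w * η w * h ℓ v w ≤ 1 / (1 - Real.sqrt c) := by
  have hs0 : 0 ≤ Real.sqrt c := Real.sqrt_nonneg c
  have hs1 : Real.sqrt c < 1 := (Real.sqrt_lt' one_pos).2 (by simpa using hc1)
  have hpos := hitting_nonneg hs0 h0 hrec
  have hmass := sum_hitting_le_pow hs0 h0 hrec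
  have hle_one : ∀ ℓ a w, h ℓ a w ≤ 1 := fun ℓ a w =>
    (single_le_sum (fun i _ => hpos ℓ a i) (mem_univ w)).trans
      ((hmass ℓ a).trans (pow_le_one₀ hs0 hs1.le))
  refine summable_and_tsum_le_of_le_geometric hs0 hs1
    (fun ℓ => sum_nonneg fun w _ =>
      mul_nonneg (mul_nonneg (hpos ℓ u w) (hη w).1) (hpos ℓ v w))
    (fun ℓ => ?_)
  exact (sum_mul_mul_le_sum univ (hpos ℓ u) hη fun w => ⟨hpos ℓ v w, hle_one ℓ v w⟩).trans
    (hmass ℓ u)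

theorem stmt_7 {V : Type*} [Fintype V] [DecidableEq V]
    (I : V → Finset V) (hI : ∀ v, (I v).Nonempty)
    (c : ℝ) (hc0 : 0 < c) (hc1 : c < 1)
    (h : ℕ → V → V → ℝ)
    (h0 : ∀ u w, h 0 u w = if w = u then 1 else 0)
    (hrec : ∀ ℓ u w, h (ℓ + 1) u w =
      ∑ v ∈ Finset.univ.filter (fun v => w ∈ I v),
        (Real.sqrt c / (I v).card) * h ℓ u v)
    (u v : V) (η : V → ℝ) (hη : ∀ w, 0 ≤ η w ∧ η w ≤ 1) :
    Summable (fun ℓ : ℕ => ∑ w, h ℓ u w * η w * h ℓ v w) ∧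
    ∑' ℓ : ℕ, ∑ w, h ℓ u w * η w * h ℓ v w ≤ 1 / (1 - Real.sqrt c) :=
  stmt_7_general I c hc1 h h0 hrec u v η hη
end
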